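/- arXiv:1611.08431 — 5 statements merged into one kernel-verified Lean document; each statement's English description precedes it below -/
import Mathlib

section
/- Let i < j be two distinct nodes of a cycle C on [m] and suppose for every path between i and j along the cycle avoiding node min({1,2,3}\{i,j}), all internal nodes exceed both i and j; then in the growth history of the cycle (nodes inserted in order 4,5,...,m starting from the triangle on {1,2,3}), the smallest node n in that segment is the unique node that was inserted into the edge {i,j}. -/
/-- A growth history of a cycle: `next m` is the successor function ("positive direction")
of the cycle `A_m` with node set `{1,…,m}`; starting from the triangle on `{1,2,3}`
(oriented so that from node 1, node 2 comes before node 3), at each time `n ≥ 4` the node `n`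
is inserted into (subdivides) the cycle-edge `{nuPlus n, nuMinus n}` of `A_{n-1}`, where
`nuPlus n` (resp. `nuMinus n`) is the neighbor of `n` in `A_n` in positive (resp. negative)
direction.  `prev m` is the predecessor function (walking in negative direction). -/
structure GrowthHistory where
  next : ℕ → ℕ → ℕ
  prev : ℕ → ℕ → ℕ
  nuPlus : ℕ → ℕ
  nuMinus : ℕ → ℕ
  base1 : next 3 1 = 2
  base2 : next 3 2 = 3
  base3 : next 3 3 = 1
  nu2p : nuPlus 2 = 1
  nu2m : nuMinus 2 = 1
  nu3p : nuPlus 3 = 1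
  nu3m : nuMinus 3 = 2
  nu_pos_p : ∀ n, 4 ≤ n → 1 ≤ nuPlus n
  nu_pos_m : ∀ n, 4 ≤ n → 1 ≤ nuMinus n
  nu_lt_p : ∀ n, 4 ≤ n → nuPlus n < n
  nu_lt_m : ∀ n, 4 ≤ n → nuMinus n < n
  nu_ne : ∀ n, 4 ≤ n → nuPlus n ≠ nuMinus n
  insert_mem : ∀ n, 4 ≤ n → next (n - 1) (nuMinus n) = nuPlus n
  step_new₁ : ∀ n, 4 ≤ n → next n (nuMinus n) = n
  step_new₂ : ∀ n, 4 ≤ n → next n n = nuPlus n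
  step_old : ∀ n, 4 ≤ n → ∀ k, 1 ≤ k → k ≤ n - 1 → k ≠ nuMinus n → next n k = next (n - 1) k
  prev_next : ∀ m, 3 ≤ m → ∀ k, 1 ≤ k → k ≤ m → prev m (next m k) = k
  next_prev : ∀ m, 3 ≤ m → ∀ k, 1 ≤ k → k ≤ m → next m (prev m k) = k

/-- The pair of neighbors `ν(n) = {ν⁺(n), ν⁻(n)}`, i.e. the cycle-edge into which node `n`
was inserted. -/
def nuSet (H : GrowthHistory) (n : ℕ) : Finset ℕ := {H.nuPlus n, H.nuMinus n}

/-- `{u,v}` is a cycle-edge of the cycle `H_m` (at time `m`). -/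
def isEdge (H : GrowthHistory) (m u v : ℕ) : Prop := H.next m u = v ∨ H.next m v = u

/-- `n` is a vertex of the pedigree graph `G^{AB}` iff `ν_A(n) ≠ ν_B(n)` (for `n ≥ 4`). -/
def isVertex (A B : GrowthHistory) (n : ℕ) : Prop := 4 ≤ n ∧ nuSet A n ≠ nuSet B n

/-- Type-1 edge "from `A` to `B`" between `n` and `k`: `ν_A(n) = ν_B(k)`. -/
def type1 (A B : GrowthHistory) (n k : ℕ) : Prop := nuSet A n = nuSet B k

/-- Type-2 edge "from `A` to `B`" between `n` and `k = max ν_A(n)`: present unless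
`ν_B(k) ∩ ν_A(n) ≠ ∅`. -/
def type2 (A B : GrowthHistory) (n k : ℕ) : Prop :=
  k = max (A.nuPlus n) (A.nuMinus n) ∧ nuSet B k ∩ nuSet A n = ∅

/-- There is an edge "from `A` to `B`" of the pedigree graph between the vertex `n` and the
earlier vertex `k < n`. -/
def edgeFrom (A B : GrowthHistory) (n k : ℕ) : Prop :=
  isVertex A B n ∧ isVertex A B k ∧ k < n ∧ (type1 A B n k ∨ type2 A B n k)

/-- The sentinel node `min({1,2,3} \ {i,j})` used to define the segment between `i` and `j`. -/
def sentinel (i j : ℕ) : ℕ :=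
  if 1 ≠ i ∧ 1 ≠ j then 1 else if 2 ≠ i ∧ 2 ≠ j then 2 else 3

/-- `L` is the list of internal nodes of the open arc ("segment") of the cycle `H_m` between
`i` and `j` which avoids the sentinel node, listed consecutively along the cycle (in one of
the two directions). -/
def IsSegment (H : GrowthHistory) (m i j : ℕ) (L : List ℕ) : Prop :=
  (List.Chain' (fun a b => H.next m a = b) (i :: (L ++ [j])) ∨
    List.Chain' (fun a b => H.next m a = b) (j :: (L ++ [i]))) ∧
  i ∉ L ∧ j ∉ L ∧ sentinel i j ∉ L

lemma GH.range (A : GrowthHistory) : ∀ t, 3 ≤ t → ∀ a, 1 ≤ a → a ≤ t →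
    1 ≤ A.next t a ∧ A.next t a ≤ t := by
  intro t ht
  induction t, ht using Nat.le_induction with
  | base =>
    intro a h1 h3
    interval_cases a <;> simp [A.base1, A.base2, A.base3]
  | succ t ht ih =>
    intro a h1 hat
    by_cases ha : a = t + 1
    · subst ha
      rw [A.step_new₂ (t+1) (by omega)]
      have h1 := A.nu_pos_p (t+1) (by omega)
      have h2 := A.nu_lt_p (t+1) (by omega)
      omega
    · by_cases hb : a = A.nuMinus (t+1)
      · rw [hb, A.step_new₁ (t+1) (by omega)]; omega
      · rw [A.step_old (t+1) (by omega) a h1 (by omega) hb, Nat.add_sub_cancel]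
        have := ih a h1 (by omega)
        omega

lemma GH.inj (A : GrowthHistory) (m : ℕ) (hm : 3 ≤ m) {a b : ℕ} (ha1 : 1 ≤ a) (ham : a ≤ m)
    (hb1 : 1 ≤ b) (hbm : b ≤ m) (h : A.next m a = A.next m b) : a = b := by
  have h1 := A.prev_next m hm a ha1 ham
  have h2 := A.prev_next m hm b hb1 hbm
  rw [h] at h1
  exact h1.symm.trans h2

lemma GH.no2 (A : GrowthHistory) : ∀ t, 3 ≤ t → ∀ a b, 1 ≤ a → a ≤ t → 1 ≤ b → b ≤ t →
    a ≠ b → A.next t a = b → A.next t b = a → False := by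
  intro t ht
  induction t, ht using Nat.le_induction with
  | base =>
    intro a b h1 h2 h3 h4 hne hab hba
    have e1 := A.base1; have e2 := A.base2; have e3 := A.base3
    interval_cases a <;> interval_cases b <;> omega
  | succ t ht ih =>
    intro a b h1 h2 h3 h4 hne hab hba
    have h4' : (4:ℕ) ≤ t+1 := by omega
    rcases eq_or_ne a (t+1) with rfl | hat
    · have hb' : b = A.nuPlus (t+1) := by
        rw [A.step_new₂ _ h4'] at hab; omega
      rcases eq_or_ne b (A.nuMinus (t+1)) with hbm | hbm
      · exact A.nu_ne (t+1) h4' (by rw [← hb', hbm])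
      · have hble : b ≤ t := by have := A.nu_lt_p (t+1) h4'; omega
        rw [A.step_old (t+1) h4' b h3 (by omega) hbm, Nat.add_sub_cancel] at hba
        have := (GH.range A t (by omega) b h3 hble).2
        omega
    · rcases eq_or_ne b (t+1) with rfl | hbt
      · have ha' : a = A.nuPlus (t+1) := by
          rw [A.step_new₂ _ h4'] at hba; omega
        rcases eq_or_ne a (A.nuMinus (t+1)) with ham | ham
        · exact A.nu_ne (t+1) h4' (by rw [← ha', ham])
        · have hale : a ≤ t := by have := A.nu_lt_p (t+1) h4'; omega
          rw [A.step_old (t+1) h4' a h1 (by omega) ham, Nat.add_sub_cancel] at hab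
          have := (GH.range A t (by omega) a h1 hale).2
          omega
      · rcases eq_or_ne a (A.nuMinus (t+1)) with ham | ham
        · rw [ham, A.step_new₁ _ h4'] at hab; omega
        · rcases eq_or_ne b (A.nuMinus (t+1)) with hbm | hbm
          · rw [hbm, A.step_new₁ _ h4'] at hba; omega
          · rw [A.step_old (t+1) h4' a h1 (by omega) ham, Nat.add_sub_cancel] at hab
            rw [A.step_old (t+1) h4' b h3 (by omega) hbm, Nat.add_sub_cancel] at hba
            exact ih a b h1 (by omega) h3 (by omega) hne hab hba

lemma GH.persist (A : GrowthHistory) (s : ℕ) (hs : 3 ≤ s) : ∀ t, s ≤ t → ∀ a b, 1 ≤ a →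
    a ≤ s → b ≤ s → A.next t a = b → A.next s a = b := by
  intro t ht
  induction t, ht using Nat.le_induction with
  | base => intro a b _ _ _ h; exact h
  | succ t ht ih =>
    intro a b h1 h2 h3 hab
    rcases eq_or_ne a (A.nuMinus (t+1)) with ham | ham
    · rw [ham, A.step_new₁ (t+1) (by omega)] at hab; omega
    · rw [A.step_old (t+1) (by omega) a h1 (by omega) ham, Nat.add_sub_cancel] at hab
      exact ih a b h1 h2 h3 hab

lemma GH.amo (A : GrowthHistory) {n k : ℕ} (hn : 4 ≤ n) (hk : 4 ≤ k) (hnk : n < k)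
    (h : nuSet A n = nuSet A k) : False := by
  unfold nuSet at h
  have hPk : A.nuPlus k = A.nuPlus n ∨ A.nuPlus k = A.nuMinus n := by
    have : A.nuPlus k ∈ ({A.nuPlus n, A.nuMinus n} : Finset ℕ) := by rw [h]; simp
    simpa using this
  have hMk : A.nuMinus k = A.nuPlus n ∨ A.nuMinus k = A.nuMinus n := by
    have : A.nuMinus k ∈ ({A.nuPlus n, A.nuMinus n} : Finset ℕ) := by rw [h]; simp
    simpa using this
  have hMn := A.nu_lt_m n hn
  have hPn := A.nu_lt_p n hn
  have h1Mn := A.nu_pos_m n hn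
  have h1Pn := A.nu_pos_p n hn
  have hins_k := A.insert_mem k hk
  have hins_n := A.insert_mem n hn
  have hnen := A.nu_ne n hn
  have hnek := A.nu_ne k hk
  rcases hPk with hP | hP <;> rcases hMk with hM | hM
  · exact hnek (hP.trans hM.symm)
  · -- same direction
    rw [hM, hP] at hins_k
    have hpers := GH.persist A n (by omega) (k-1) (by omega) (A.nuMinus n) (A.nuPlus n)
      h1Mn (by omega) (by omega) hins_k
    have : A.nuPlus n = n := by rw [← hpers]; exact A.step_new₁ n hn
    omega
  · -- opposite direction
    rw [hM, hP] at hins_k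
    have hpers := GH.persist A (n-1) (by omega) (k-1) (by omega) (A.nuPlus n) (A.nuMinus n)
      h1Pn (by omega) (by omega) hins_k
    exact GH.no2 A (n-1) (by omega) (A.nuMinus n) (A.nuPlus n) h1Mn (by omega) h1Pn (by omega)
      (Ne.symm hnen) hins_n hpers
  · exact hnek (hP.trans hM.symm)

lemma GH.chain_bound (A : GrowthHistory) (m : ℕ) (hm : 3 ≤ m) : ∀ (C : List ℕ) (x : ℕ),
    List.Chain' (fun a b => A.next m a = b) (x :: C) → 1 ≤ x → x ≤ m →
    ∀ a ∈ x :: C, 1 ≤ a ∧ a ≤ m := by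
  intro C
  induction C with
  | nil =>
    intro x _ h1 h2 a ha
    simp at ha; subst ha; exact ⟨h1, h2⟩
  | cons y t ih =>
    intro x hch h1 h2 a ha
    unfold List.Chain' at hch
    rw [List.isChain_cons_cons] at hch
    have hy := GH.range A m hm x h1 h2
    rw [hch.1] at hy
    rcases List.mem_cons.mp ha with rfl | ha'
    · exact ⟨h1, h2⟩
    · exact ih y hch.2 hy.1 hy.2 a ha'

lemma chain'_transfer {R R' : ℕ → ℕ → Prop} : ∀ (C : List ℕ), List.Chain' R C →
    (∀ a b, a ∈ C → b ∈ C → R a b → R' a b) → List.Chain' R' C := by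
  intro C
  induction C with
  | nil => intro _ _; exact List.isChain_nil
  | cons x t ih =>
    intro h hi
    cases t with
    | nil => exact List.isChain_singleton x
    | cons y t' =>
      unfold List.Chain' at h ⊢
      rw [List.isChain_cons_cons] at h ⊢
      refine ⟨hi x y (by simp) (by simp) h.1, ih h.2 ?_⟩
      intro a b ha hb
      exact hi a b (List.mem_cons_of_mem x ha) (List.mem_cons_of_mem x hb)

lemma chain'_nodup {f : ℕ → ℕ} : ∀ (C : List ℕ) (x : ℕ),
    List.Chain' (fun a b => f a = b) (x :: C) →
    (∀ a b, a ∈ x :: C → b ∈ x :: C → f a = f b → a = b) → x ∉ C → (x :: C).Nodup := by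
  intro C
  induction C with
  | nil => intro x _ _ _; simp
  | cons y C' ih =>
    intro x hch hinj hx
    have hch' : List.Chain' (fun a b => f a = b) (y :: C') := (List.isChain_cons_cons.mp hch).2
    have hxy : f x = y := (List.isChain_cons_cons.mp hch).1
    have hy : y ∉ C' := by
      intro hyC
      obtain ⟨D, E, hDE⟩ := List.append_of_mem hyC
      have hsplit : y :: C' = (y :: D) ++ y :: E := by rw [hDE]; simp
      have hch2 := hch'
      unfold List.Chain' at hch2
      rw [hsplit, List.isChain_append] at hch2
      obtain ⟨-, -, hlink⟩ := hch2
      have hne : (y :: D) ≠ [] := by simp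
      have hpy : f ((y :: D).getLast hne) = y := by
        apply hlink
        · rw [List.getLast?_eq_getLast hne]; rfl
        · rfl
      have hpmem : (y :: D).getLast hne ∈ y :: D := List.getLast_mem hne
      have hpm2 : (y :: D).getLast hne ∈ y :: C' := by
        rcases List.mem_cons.mp hpmem with h | h
        · rw [h]; simp
        · rw [hDE]
          exact List.mem_cons_of_mem _ (List.mem_append_left _ h)
      have hxp : (y :: D).getLast hne = x :=
        hinj _ _ (List.mem_cons_of_mem x hpm2) (by simp) (hpy.trans hxy.symm)
      rw [hxp] at hpm2
      exact hx hpm2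
    refine List.nodup_cons.mpr ⟨hx, ih y hch' ?_ hy⟩
    intro a b ha hb
    exact hinj a b (List.mem_cons_of_mem x ha) (List.mem_cons_of_mem x hb)

lemma GH.splice (A : GrowthHistory) (m : ℕ) (hm4 : 4 ≤ m) (P Q : List ℕ) (hP : P ≠ [])
    (hQ : Q ≠ []) (hmP : m ∉ P) (hmQ : m ∉ Q)
    (hbound : ∀ a ∈ P ++ m :: Q, 1 ≤ a ∧ a ≤ m)
    (hch : List.Chain' (fun a b => A.next m a = b) (P ++ m :: Q)) :
    List.Chain' (fun a b => A.next (m-1) a = b) (P ++ Q) := by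
  have hm3 : (3:ℕ) ≤ m := by omega
  unfold List.Chain' at hch
  rw [List.isChain_append] at hch
  obtain ⟨hchP, hchQ', hlink⟩ := hch
  obtain ⟨q0, Q', rfl⟩ := List.exists_cons_of_ne_nil hQ
  have hq0 : A.next m m = q0 := (List.isChain_cons_cons.mp hchQ').1
  have hchQ : List.Chain' (fun a b => A.next m a = b) (q0 :: Q') :=
    (List.isChain_cons_cons.mp hchQ').2
  have hp0 : A.next m (P.getLast hP) = m := by
    apply hlink
    · rw [List.getLast?_eq_getLast hP]; rfl
    · rfl
  have hMm := A.nu_lt_m m hm4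
  have h1Mm := A.nu_pos_m m hm4
  have hplast := hbound (P.getLast hP) (List.mem_append_left _ (List.getLast_mem hP))
  have hpM : P.getLast hP = A.nuMinus m :=
    GH.inj A m hm3 hplast.1 hplast.2 h1Mm (by omega)
      (hp0.trans (A.step_new₁ m hm4).symm)
  unfold List.Chain'
  rw [List.isChain_append]
  refine ⟨?_, ?_, ?_⟩
  · refine chain'_transfer P hchP ?_
    intro a b ha hb hr
    have hba := hbound a (List.mem_append_left _ ha)
    have ham : a ≠ A.nuMinus m := by
      intro h
      rw [h, A.step_new₁ m hm4] at hr
      exact hmP (hr ▸ hb)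
    rw [← hr, A.step_old m hm4 a hba.1 (by rcases eq_or_ne a m with rfl|h; exact absurd ha hmP; omega) ham]
  · refine chain'_transfer (q0 :: Q') hchQ ?_
    intro a b ha hb hr
    have hba := hbound a (List.mem_append_right _ (List.mem_cons_of_mem _ ha))
    have ham : a ≠ A.nuMinus m := by
      intro h
      rw [h, A.step_new₁ m hm4] at hr
      exact hmQ (hr ▸ hb)
    rw [← hr, A.step_old m hm4 a hba.1 (by rcases eq_or_ne a m with rfl|h; exact absurd ha hmQ; omega) ham]
  · intro p hp q hq
    rw [List.getLast?_eq_getLast hP, Option.mem_some_iff] at hp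
    simp only [List.head?_cons, Option.mem_some_iff] at hq
    subst hp; subst hq
    rw [hpM, A.insert_mem m hm4]
    rw [A.step_new₂ m hm4] at hq0
    exact hq0

lemma GH.main_ex (A : GrowthHistory) : ∀ m, 3 ≤ m → ∀ i j L n, 1 ≤ i → i < j → j ≤ m →
    IsSegment A m i j L → (∀ x ∈ L, i < x ∧ j < x) → n ∈ L → (∀ x ∈ L, n ≤ x) →
    nuSet A n = {i, j} := by
  intro m
  induction m using Nat.strong_induction_on with
  | _ m IH =>
  intro hm3 i j L n hi hij hjm hseg hbig hn hmin
  obtain ⟨hchain, hiL, hjL, hsL⟩ := hseg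
  obtain ⟨d, e, hde, hch⟩ : ∃ d e, ((d = i ∧ e = j) ∨ (d = j ∧ e = i)) ∧
      List.Chain' (fun a b => A.next m a = b) (d :: (L ++ [e])) := by
    rcases hchain with h | h
    exacts [⟨i, j, Or.inl ⟨rfl, rfl⟩, h⟩, ⟨j, i, Or.inr ⟨rfl, rfl⟩, h⟩]
  have hd1 : 1 ≤ d := by rcases hde with ⟨rfl, rfl⟩ | ⟨rfl, rfl⟩ <;> omega
  have hdm : d ≤ m := by rcases hde with ⟨rfl, rfl⟩ | ⟨rfl, rfl⟩ <;> omega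
  have hbnd := GH.chain_bound A m hm3 (L ++ [e]) d hch hd1 hdm
  have hnm : n ≤ m := (hbnd n (by simp [hn])).2
  have hjn : j < n := (hbig n hn).2
  have hin : i < n := (hbig n hn).1
  have hn4 : 4 ≤ n := by
    by_cases hj2 : j = 2
    · have hi1 : i = 1 := by omega
      have hs3 : sentinel i j = 3 := by subst hi1; subst hj2; simp [sentinel]
      have : n ≠ 3 := by intro h; rw [← h] at hs3; exact hsL (hs3 ▸ hn)
      omega
    · omega
  have hm4 : 4 ≤ m := by omega
  have hjm' : j < m := by omega
  have hdneq : d ≠ e := by rcases hde with ⟨rfl, rfl⟩ | ⟨rfl, rfl⟩ <;> omega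
  have hdnL : d ∉ L := by rcases hde with ⟨rfl, rfl⟩ | ⟨rfl, rfl⟩ <;> assumption
  have heNL : e ∉ L := by rcases hde with ⟨rfl, rfl⟩ | ⟨rfl, rfl⟩ <;> assumption
  have hdm' : d < m := by rcases hde with ⟨rfl, rfl⟩ | ⟨rfl, rfl⟩ <;> omega
  have hem' : e < m := by rcases hde with ⟨rfl, rfl⟩ | ⟨rfl, rfl⟩ <;> omega
  by_cases hmL : m ∈ L
  · by_cases hnm' : n = m
    · -- L = [m]
      subst hnm'
      have hLm : ∀ x ∈ L, x = n := fun x hx =>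
        le_antisymm (hbnd x (by simp [hx])).2 (hmin x hx)
      have hLeq : L = [n] := by
        cases L with
        | nil => exact absurd hn (by simp)
        | cons x t =>
          have hx : x = n := hLm x (by simp)
          cases t with
          | nil => rw [hx]
          | cons y t' =>
            have hy : y = n := hLm y (by simp [hx])
            exfalso
            have hch2 : A.next n x = y := by
              have h0 : List.Chain' (fun a b => A.next n a = b) (x :: y :: (t' ++ [e])) := by
                simpa [List.Chain'] using (List.isChain_cons_cons.mp hch).2
              exact (List.isChain_cons_cons.mp h0).1
            rw [hx, hy, A.step_new₂ n hm4] at hch2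
            have := A.nu_lt_p n hm4
            omega
      rw [hLeq] at hch
      have hdm2 : A.next n d = n := (List.isChain_cons_cons.mp hch).1
      have hme : A.next n n = e := by
        have h0 : List.Chain' (fun a b => A.next n a = b) (n :: [e]) := by
          simpa [List.Chain'] using (List.isChain_cons_cons.mp hch).2
        exact (List.isChain_cons_cons.mp h0).1
      have he' : A.nuPlus n = e := (A.step_new₂ n hm4).symm.trans hme
      have hd' : d = A.nuMinus n :=
        GH.inj A n hm3 hd1 hdm (A.nu_pos_m n hm4) (by have := A.nu_lt_m n hm4; omega)
          (hdm2.trans (A.step_new₁ n hm4).symm)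
      unfold nuSet
      rw [he', ← hd']
      obtain ⟨hd2, he2⟩ | ⟨hd2, he2⟩ := hde
      · rw [hd2, he2]; exact Finset.pair_comm j i
      · rw [hd2, he2]
    · -- splice out m
      have hnltm : n < m := lt_of_le_of_ne hnm hnm'
      have hinj : ∀ a b, a ∈ d :: (L ++ [e]) → b ∈ d :: (L ++ [e]) →
          A.next m a = A.next m b → a = b := by
        intro a b ha hb h
        have h1 := hbnd a ha
        have h2 := hbnd b hb
        exact GH.inj A m hm3 h1.1 h1.2 h2.1 h2.2 h
      have hdne : d ∉ L ++ [e] := by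
        simp only [List.mem_append, List.mem_singleton]
        rintro (h | rfl)
        · exact hdnL h
        · exact hdneq rfl
      have hnd := chain'_nodup (L ++ [e]) d hch hinj hdne
      have hndL : L.Nodup := ((L.sublist_append_left [e]).nodup (List.nodup_cons.mp hnd).2)
      obtain ⟨L₁, L₂, hL12⟩ := List.append_of_mem hmL
      have hndL' := hL12 ▸ hndL
      have hmL₂ : m ∉ L₂ :=
        (List.nodup_cons.mp ((List.sublist_append_right L₁ (m :: L₂)).nodup hndL')).1
      have hmL₁ : m ∉ L₁ := by
        intro h
        exact (List.disjoint_of_nodup_append hndL') h (by simp)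
      have hCeq : d :: (L ++ [e]) = (d :: L₁) ++ m :: (L₂ ++ [e]) := by
        rw [hL12]; simp
      have hbnd' : ∀ a ∈ (d :: L₁) ++ m :: (L₂ ++ [e]), 1 ≤ a ∧ a ≤ m := by
        rw [← hCeq]; exact hbnd
      have hch2 := GH.splice A m hm4 (d :: L₁) (L₂ ++ [e]) (by simp) (by simp)
        (by intro hcon
            rcases List.mem_cons.mp hcon with h | h
            · omega
            · exact hmL₁ h)
        (by intro hcon
            rcases List.mem_append.mp hcon with h | h
            · exact hmL₂ h
            · simp at h; omega)
        hbnd' (hCeq ▸ hch)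
      have hch3 : List.Chain' (fun a b => A.next (m-1) a = b) (d :: ((L₁ ++ L₂) ++ [e])) := by
        simpa using hch2
      have hsub : ∀ x ∈ L₁ ++ L₂, x ∈ L := by
        intro x hx
        rw [hL12]
        simp only [List.mem_append, List.mem_cons] at hx ⊢
        tauto
      have hseg' : IsSegment A (m-1) i j (L₁ ++ L₂) := by
        refine ⟨?_, fun h => hiL (hsub i h), fun h => hjL (hsub _ h), fun h => hsL (hsub _ h)⟩
        rcases hde with ⟨rfl, rfl⟩ | ⟨rfl, rfl⟩
        exacts [Or.inl hch3, Or.inr hch3]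
      have hnmem : n ∈ L₁ ++ L₂ := by
        rw [hL12] at hn
        simp only [List.mem_append, List.mem_cons] at hn ⊢
        rcases hn with h | h | h
        · exact Or.inl h
        · exact absurd h hnm'
        · exact Or.inr h
      exact IH (m-1) (by omega) (by omega) i j (L₁ ++ L₂) n hi hij (by omega) hseg'
        (fun x hx => hbig x (hsub x hx)) hnmem (fun x hx => hmin x (hsub x hx))
  · -- m ∉ L
    have hmC : m ∉ d :: (L ++ [e]) := by
      intro hcon
      rcases List.mem_cons.mp hcon with h | h
      · omega
      · rcases List.mem_append.mp h with h2 | h2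
        · exact hmL h2
        · simp at h2; omega
    have hch' : List.Chain' (fun a b => A.next (m-1) a = b) (d :: (L ++ [e])) := by
      refine chain'_transfer _ hch ?_
      intro a b ha hb hr
      have hba := hbnd a ha
      have ham : a ≠ m := fun h => hmC (h ▸ ha)
      have hanm : a ≠ A.nuMinus m := by
        intro h
        rw [h, A.step_new₁ m hm4] at hr
        exact hmC (hr ▸ hb)
      rw [← hr, A.step_old m hm4 a hba.1 (by omega) hanm]
    have hseg' : IsSegment A (m-1) i j L := by
      refine ⟨?_, hiL, hjL, hsL⟩
      rcases hde with ⟨rfl, rfl⟩ | ⟨rfl, rfl⟩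
      exacts [Or.inl hch', Or.inr hch']
    exact IH (m-1) (by omega) (by omega) i j L n hi hij (by omega) hseg' hbig hn hmin

/-- If `i < j` are nodes of `A_m` and every node in the (nonempty) segment of `A_m` between
`i` and `j` exceeds both `i` and `j`, then the smallest node `n` of that segment is the
unique node that was inserted into the edge `{i,j}`, i.e. `ν_A(n) = {i,j}`. -/
theorem segment_min_is_inserted_node (A : GrowthHistory) (m i j : ℕ) (hm : 3 ≤ m)
    (hi : 1 ≤ i) (hij : i < j) (hjm : j ≤ m) (L : List ℕ) (hL : IsSegment A m i j L)
    (hne : L ≠ []) (hbig : ∀ x ∈ L, i < x ∧ j < x) :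
    ∀ n ∈ L, (∀ x ∈ L, n ≤ x) →
      nuSet A n = {i, j} ∧ ∀ k, 4 ≤ k → k ≤ m → nuSet A k = {i, j} → k = n := by
  intro n hn hmin
  have hjn : j < n := (hbig n hn).2
  have hn4 : 4 ≤ n := by
    by_cases hj2 : j = 2
    · have hi1 : i = 1 := by omega
      have hs3 : sentinel i j = 3 := by subst hi1; subst hj2; simp [sentinel]
      have hne3 : n ≠ 3 := by
        intro h
        apply hL.2.2.2
        rw [hs3, ← h]
        exact hn
      omega
    · omega
  have hex := GH.main_ex A m hm i j L n hi hij hjm hL hbig hn hmin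
  refine ⟨hex, ?_⟩
  intro k hk4 hkm hkeq
  by_contra hneq
  have heq2 : nuSet A n = nuSet A k := hex.trans hkeq.symm
  rcases lt_or_gt_of_ne (Ne.symm hneq) with h | h
  · exact GH.amo A hn4 hk4 h heq2
  · exact GH.amo A hk4 hn4 h heq2.symm
end

section
/- In the growth history of a cycle built by node insertions (starting from the triangle on {1,2,3}, inserting node n into an edge of A_{n-1} for each n ≥ 4), for any node k ≥ 2 and any m ≥ k, the two neighbors ν_A^+(k), ν_A^-(k) of k in A_k can be recovered from A_m as follows: starting from k and walking along A_m in the positive (resp. negative) direction, the first node encountered that is smaller than k is ν_A^+(k) (resp. ν_A^-(k)). -/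
section Aux
variable (A : GrowthHistory)

lemma gh_next_mem : ∀ m, 3 ≤ m → ∀ x, 1 ≤ x → x ≤ m → 1 ≤ A.next m x ∧ A.next m x ≤ m := by
  intro m hm
  induction m, hm using Nat.le_induction with
  | base =>
    intro x h1 h3
    interval_cases x <;> simp [A.base1, A.base2, A.base3]
  | succ m hm ih =>
    intro x h1 hx
    have h4 : 4 ≤ m + 1 := by omega
    by_cases hx1 : x = m + 1
    · subst hx1
      rw [A.step_new₂ _ h4]
      have := A.nu_lt_p _ h4
      have := A.nu_pos_p _ h4
      omega
    · by_cases hx2 : x = A.nuMinus (m + 1)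
      · rw [hx2, A.step_new₁ _ h4]; omega
      · have hst := A.step_old (m + 1) h4 x h1 (by omega) hx2
        simp only [Nat.add_sub_cancel] at hst
        rw [hst]
        have := ih x h1 (by omega)
        omega

lemma gh_exists_pre (m : ℕ) (hm : 3 ≤ m) (y : ℕ) (hy1 : 1 ≤ y) (hy2 : y ≤ m) :
    ∃ x, 1 ≤ x ∧ x ≤ m ∧ A.next m x = y := by
  classical
  let f : Finset.Icc 1 m → Finset.Icc 1 m := fun x =>
    ⟨A.next m x.1, by
      have hx := x.2
      simp only [Finset.mem_Icc] at hx ⊢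
      exact gh_next_mem A m hm x.1 hx.1 hx.2⟩
  have hinj : Function.Injective f := by
    intro a b hab
    have ha := a.2; have hb := b.2
    simp only [Finset.mem_Icc] at ha hb
    have h1 := A.prev_next m hm a.1 ha.1 ha.2
    have h2 := A.prev_next m hm b.1 hb.1 hb.2
    have h3 : A.next m a.1 = A.next m b.1 := congrArg Subtype.val hab
    apply Subtype.ext
    rw [← h1, ← h2, h3]
  have hsurj : Function.Surjective f := Finite.surjective_of_injective hinj
  obtain ⟨x, hx⟩ := hsurj ⟨y, by simp only [Finset.mem_Icc]; omega⟩
  have hxm := x.2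
  simp only [Finset.mem_Icc] at hxm
  exact ⟨x.1, hxm.1, hxm.2, congrArg Subtype.val hx⟩

lemma gh_prev_mem (m : ℕ) (hm : 3 ≤ m) (y : ℕ) (hy1 : 1 ≤ y) (hy2 : y ≤ m) :
    1 ≤ A.prev m y ∧ A.prev m y ≤ m ∧ A.next m (A.prev m y) = y := by
  obtain ⟨x, hx1, hx2, hx3⟩ := gh_exists_pre A m hm y hy1 hy2
  have h := A.prev_next m hm x hx1 hx2
  rw [hx3] at h
  refine ⟨h ▸ hx1, h ▸ hx2, by rw [h, hx3]⟩

lemma gh_sim_next (m : ℕ) (hm : 3 ≤ m) :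
    ∀ t x, 1 ≤ x → x ≤ m →
      ∃ t', t ≤ t' ∧ (A.next (m + 1))^[t'] x = (A.next m)^[t] x ∧
        ∀ s, s < t' → (∃ s', s' < t ∧ (A.next (m + 1))^[s] x = (A.next m)^[s'] x) ∨
          (A.next (m + 1))^[s] x = m + 1 := by
  intro t
  induction t with
  | zero => intro x _ _; exact ⟨0, le_refl _, rfl, by omega⟩
  | succ t ih =>
    intro x hx1 hx2
    have h4 : 4 ≤ m + 1 := by omega
    have hy := gh_next_mem A m hm x hx1 hx2
    by_cases hx : x = A.nuMinus (m + 1)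
    · have e1 : A.next (m + 1) x = m + 1 := by rw [hx]; exact A.step_new₁ _ h4
      have e2 : A.next (m + 1) (m + 1) = A.nuPlus (m + 1) := A.step_new₂ _ h4
      have e3 : A.next m x = A.nuPlus (m + 1) := by
        have h := A.insert_mem (m + 1) h4
        simp only [Nat.add_sub_cancel] at h
        rw [hx]; exact h
      have h2x : (A.next (m + 1))^[2] x = A.next m x := by
        show A.next (m + 1) (A.next (m + 1) x) = A.next m x
        rw [e1, e2, e3]
      obtain ⟨t', ht1, ht2, ht3⟩ := ih (A.next m x) hy.1 hy.2
      refine ⟨t' + 2, by omega, ?_, ?_⟩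
      · rw [Function.iterate_add_apply, h2x, ht2, Function.iterate_succ_apply]
      · intro s hs
        match s, hs with
        | 0, _ => exact Or.inl ⟨0, by omega, rfl⟩
        | 1, _ => exact Or.inr (by simpa using e1)
        | (s0 + 2), hs =>
          have hval : (A.next (m + 1))^[s0 + 2] x = (A.next (m + 1))^[s0] (A.next m x) := by
            rw [Function.iterate_add_apply, h2x]
          rcases ht3 s0 (by omega) with ⟨s', hs', he⟩ | he
          · exact Or.inl ⟨s' + 1, by omega,
              by rw [hval, he, Function.iterate_succ_apply]⟩
          · exact Or.inr (by rw [hval, he])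
    · have e1 : A.next (m + 1) x = A.next m x := by
        have h := A.step_old (m + 1) h4 x hx1 (by omega) hx
        simpa only [Nat.add_sub_cancel] using h
      obtain ⟨t', ht1, ht2, ht3⟩ := ih (A.next m x) hy.1 hy.2
      refine ⟨t' + 1, by omega, ?_, ?_⟩
      · rw [Function.iterate_add_apply, Function.iterate_one, e1, ht2,
          Function.iterate_succ_apply]
      · intro s hs
        match s, hs with
        | 0, _ => exact Or.inl ⟨0, by omega, rfl⟩
        | (s0 + 1), hs =>
          have hval : (A.next (m + 1))^[s0 + 1] x = (A.next (m + 1))^[s0] (A.next m x) := by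
            rw [Function.iterate_succ_apply, e1]
          rcases ht3 s0 (by omega) with ⟨s', hs', he⟩ | he
          · exact Or.inl ⟨s' + 1, by omega,
              by rw [hval, he, Function.iterate_succ_apply]⟩
          · exact Or.inr (by rw [hval, he])

lemma gh_prev_top (m : ℕ) (hm : 3 ≤ m) : A.prev (m + 1) (m + 1) = A.nuMinus (m + 1) := by
  have h4 : 4 ≤ m + 1 := by omega
  have h := A.step_new₁ (m + 1) h4
  have h2 := A.prev_next (m + 1) (by omega) (A.nuMinus (m + 1)) (A.nu_pos_m _ h4)
    (le_of_lt (A.nu_lt_m _ h4))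
  rw [h] at h2; exact h2

lemma gh_prev_nuPlus (m : ℕ) (hm : 3 ≤ m) : A.prev (m + 1) (A.nuPlus (m + 1)) = m + 1 := by
  have h4 : 4 ≤ m + 1 := by omega
  have h := A.step_new₂ (m + 1) h4
  have h2 := A.prev_next (m + 1) (by omega) (m + 1) (by omega) (le_refl _)
  rw [h] at h2; exact h2

lemma gh_prev_old_nuPlus (m : ℕ) (hm : 3 ≤ m) :
    A.prev m (A.nuPlus (m + 1)) = A.nuMinus (m + 1) := by
  have h4 : 4 ≤ m + 1 := by omega
  have h := A.insert_mem (m + 1) h4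
  simp only [Nat.add_sub_cancel] at h
  have h2 := A.prev_next m hm (A.nuMinus (m + 1)) (A.nu_pos_m _ h4)
    (by have := A.nu_lt_m _ h4; omega)
  rw [h] at h2; exact h2

lemma gh_prev_old (m : ℕ) (hm : 3 ≤ m) (y : ℕ) (hy1 : 1 ≤ y) (hy2 : y ≤ m)
    (hyne : y ≠ A.nuPlus (m + 1)) : A.prev (m + 1) y = A.prev m y := by
  have h4 : 4 ≤ m + 1 := by omega
  have hp := gh_prev_mem A m hm y hy1 hy2
  have hxne : A.prev m y ≠ A.nuMinus (m + 1) := by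
    intro h
    apply hyne
    have hins := A.insert_mem (m + 1) h4
    simp only [Nat.add_sub_cancel] at hins
    rw [← hp.2.2, h, hins]
  have hnn : A.next (m + 1) (A.prev m y) = y := by
    have h := A.step_old (m + 1) h4 (A.prev m y) hp.1 (by omega) hxne
    simp only [Nat.add_sub_cancel] at h
    rw [h, hp.2.2]
  have h2 := A.prev_next (m + 1) (by omega) (A.prev m y) hp.1 (by omega)
  rw [hnn] at h2; exact h2

lemma gh_sim_prev (m : ℕ) (hm : 3 ≤ m) :
    ∀ t x, 1 ≤ x → x ≤ m →
      ∃ t', t ≤ t' ∧ (A.prev (m + 1))^[t'] x = (A.prev m)^[t] x ∧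
        ∀ s, s < t' → (∃ s', s' < t ∧ (A.prev (m + 1))^[s] x = (A.prev m)^[s'] x) ∨
          (A.prev (m + 1))^[s] x = m + 1 := by
  intro t
  induction t with
  | zero => intro x _ _; exact ⟨0, le_refl _, rfl, by omega⟩
  | succ t ih =>
    intro x hx1 hx2
    have h4 : 4 ≤ m + 1 := by omega
    have hy := gh_prev_mem A m hm x hx1 hx2
    by_cases hx : x = A.nuPlus (m + 1)
    · have e1 : A.prev (m + 1) x = m + 1 := by rw [hx]; exact gh_prev_nuPlus A m hm
      have e2 : A.prev (m + 1) (m + 1) = A.nuMinus (m + 1) := gh_prev_top A m hm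
      have e3 : A.prev m x = A.nuMinus (m + 1) := by rw [hx]; exact gh_prev_old_nuPlus A m hm
      have h2x : (A.prev (m + 1))^[2] x = A.prev m x := by
        show A.prev (m + 1) (A.prev (m + 1) x) = A.prev m x
        rw [e1, e2, e3]
      obtain ⟨t', ht1, ht2, ht3⟩ := ih (A.prev m x) hy.1 hy.2.1
      refine ⟨t' + 2, by omega, ?_, ?_⟩
      · rw [Function.iterate_add_apply, h2x, ht2, Function.iterate_succ_apply]
      · intro s hs
        match s, hs with
        | 0, _ => exact Or.inl ⟨0, by omega, rfl⟩
        | 1, _ => exact Or.inr (by simpa using e1)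
        | (s0 + 2), hs =>
          have hval : (A.prev (m + 1))^[s0 + 2] x = (A.prev (m + 1))^[s0] (A.prev m x) := by
            rw [Function.iterate_add_apply, h2x]
          rcases ht3 s0 (by omega) with ⟨s', hs', he⟩ | he
          · exact Or.inl ⟨s' + 1, by omega,
              by rw [hval, he, Function.iterate_succ_apply]⟩
          · exact Or.inr (by rw [hval, he])
    · have e1 : A.prev (m + 1) x = A.prev m x := gh_prev_old A m hm x hx1 hx2 hx
      obtain ⟨t', ht1, ht2, ht3⟩ := ih (A.prev m x) hy.1 hy.2.1
      refine ⟨t' + 1, by omega, ?_, ?_⟩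
      · rw [Function.iterate_add_apply, Function.iterate_one, e1, ht2,
          Function.iterate_succ_apply]
      · intro s hs
        match s, hs with
        | 0, _ => exact Or.inl ⟨0, by omega, rfl⟩
        | (s0 + 1), hs =>
          have hval : (A.prev (m + 1))^[s0 + 1] x = (A.prev (m + 1))^[s0] (A.prev m x) := by
            rw [Function.iterate_succ_apply, e1]
          rcases ht3 s0 (by omega) with ⟨s', hs', he⟩ | he
          · exact Or.inl ⟨s' + 1, by omega,
              by rw [hval, he, Function.iterate_succ_apply]⟩
          · exact Or.inr (by rw [hval, he])

lemma gh_main :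
    ∀ m, 3 ≤ m → ∀ k, 2 ≤ k → k ≤ m →
      (∃ t, 1 ≤ t ∧ (A.next m)^[t] k = A.nuPlus k ∧ (A.next m)^[t] k < k ∧
        ∀ s, 1 ≤ s → s < t → k ≤ (A.next m)^[s] k) ∧
      (∃ t, 1 ≤ t ∧ (A.prev m)^[t] k = A.nuMinus k ∧ (A.prev m)^[t] k < k ∧
        ∀ s, 1 ≤ s → s < t → k ≤ (A.prev m)^[s] k) := by
  intro m hm
  induction m, hm using Nat.le_induction with
  | base =>
    intro k hk2 hk3
    have p12 : A.prev 3 2 = 1 := by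
      have h := A.prev_next 3 le_rfl 1 le_rfl (by omega)
      rwa [A.base1] at h
    have p23 : A.prev 3 3 = 2 := by
      have h := A.prev_next 3 le_rfl 2 (by omega) (by omega)
      rwa [A.base2] at h
    interval_cases k
    · constructor
      · refine ⟨2, by omega, ?_, ?_, ?_⟩
        · show A.next 3 ((A.next 3)^[1] 2) = A.nuPlus 2
          rw [Function.iterate_one, A.base2, A.base3, A.nu2p]
        · show A.next 3 ((A.next 3)^[1] 2) < 2
          rw [Function.iterate_one, A.base2, A.base3]; omega
        · intro s hs1 hs2
          have hs : s = 1 := by omega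
          subst hs
          rw [Function.iterate_one, A.base2]; omega
      · refine ⟨1, le_rfl, ?_, ?_, by omega⟩
        · rw [Function.iterate_one, p12, A.nu2m]
        · rw [Function.iterate_one, p12]; omega
    · constructor
      · refine ⟨1, le_rfl, ?_, ?_, by omega⟩
        · rw [Function.iterate_one, A.base3, A.nu3p]
        · rw [Function.iterate_one, A.base3]; omega
      · refine ⟨1, le_rfl, ?_, ?_, by omega⟩
        · rw [Function.iterate_one, p23, A.nu3m]
        · rw [Function.iterate_one, p23]; omega
  | succ m hm ih =>
    intro k hk2 hkm
    have h4 : 4 ≤ m + 1 := by omega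
    by_cases hk : k = m + 1
    · subst hk
      constructor
      · refine ⟨1, le_rfl, ?_, ?_, by omega⟩
        · rw [Function.iterate_one]; exact A.step_new₂ _ h4
        · rw [Function.iterate_one, A.step_new₂ _ h4]; exact A.nu_lt_p _ h4
      · refine ⟨1, le_rfl, ?_, ?_, by omega⟩
        · rw [Function.iterate_one]; exact gh_prev_top A m hm
        · rw [Function.iterate_one, gh_prev_top A m hm]; exact A.nu_lt_m _ h4
    · obtain ⟨⟨tp, htp1, htp2, htp3, htp4⟩, ⟨tm, htm1, htm2, htm3, htm4⟩⟩ :=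
        ih k hk2 (by omega)
      constructor
      · obtain ⟨t', ht1, ht2, ht3⟩ := gh_sim_next A m hm tp k (by omega) (by omega)
        refine ⟨t', by omega, by rw [ht2]; exact htp2, by rw [ht2]; exact htp3, ?_⟩
        intro s hs1 hs2
        rcases ht3 s hs2 with ⟨s', hs', he⟩ | he
        · rw [he]
          rcases Nat.eq_zero_or_pos s' with h0 | h0
          · subst h0; simp
          · exact htp4 s' h0 hs'
        · rw [he]; omega
      · obtain ⟨t', ht1, ht2, ht3⟩ := gh_sim_prev A m hm tm k (by omega) (by omega)
        refine ⟨t', by omega, by rw [ht2]; exact htm2, by rw [ht2]; exact htm3, ?_⟩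
        intro s hs1 hs2
        rcases ht3 s hs2 with ⟨s', hs', he⟩ | he
        · rw [he]
          rcases Nat.eq_zero_or_pos s' with h0 | h0
          · subst h0; simp
          · exact htm4 s' h0 hs'
        · rw [he]; omega

end Aux

/-- For any node `k ≥ 2` and any `m ≥ k`, the neighbors `ν_A⁺(k)` and `ν_A⁻(k)` of `k` in
`A_k` can be recovered from `A_m`: walking from `k` in the positive (resp. negative)
direction, the first node encountered which is smaller than `k` is `ν_A⁺(k)`
(resp. `ν_A⁻(k)`). -/
theorem find_nu_by_walking (A : GrowthHistory) (k m : ℕ) (hk : 2 ≤ k) (hkm : k ≤ m)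
    (hm : 3 ≤ m) :
    (∃ t, 1 ≤ t ∧ (A.next m)^[t] k = A.nuPlus k ∧ (A.next m)^[t] k < k ∧
      ∀ s, 1 ≤ s → s < t → k ≤ (A.next m)^[s] k) ∧
    (∃ t, 1 ≤ t ∧ (A.prev m)^[t] k = A.nuMinus k ∧ (A.prev m)^[t] k < k ∧
      ∀ s, 1 ≤ s → s < t → k ≤ (A.prev m)^[s] k) := by
  exact gh_main A m hm k hk hkm
end

section
/- Let A, B be two cycle growth histories and n ≥ 4. The node n is an isolated vertex of the pedigree graph G_n^{AB} if and only if ν_A(n) is an edge of B_n and ν_B(n) is an edge of A_n. -/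
namespace GrowthHistory

lemma pair_eq_pair_iff {a b c d : ℕ} :
    ({a, b} : Finset ℕ) = {c, d} ↔ (a = c ∧ b = d) ∨ (a = d ∧ b = c) := by
  constructor
  · intro h
    have hm : ∀ x : ℕ, (x = a ∨ x = b) ↔ (x = c ∨ x = d) := by
      intro x
      have := Finset.ext_iff.mp h x
      simpa using this
    have h1 := (hm a).mp (Or.inl rfl)
    have h2 := (hm b).mp (Or.inr rfl)
    have h3 := (hm c).mpr (Or.inl rfl)
    have h4 := (hm d).mpr (Or.inr rfl)
    omega
  · rintro (⟨rfl, rfl⟩ | ⟨rfl, rfl⟩)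
    · rfl
    · exact Finset.pair_comm a b

lemma mem_nuSet {H : GrowthHistory} {z m : ℕ} :
    z ∈ nuSet H m ↔ z = H.nuPlus m ∨ z = H.nuMinus m := by
  simp [nuSet]

lemma isEdge_comm {H : GrowthHistory} {m x y : ℕ} :
    isEdge H m x y ↔ isEdge H m y x := Or.comm

lemma isEdge_congr {H : GrowthHistory} {m x y u v : ℕ}
    (h : ({x, y} : Finset ℕ) = {u, v}) : isEdge H m x y ↔ isEdge H m u v := by
  rcases pair_eq_pair_iff.mp h with ⟨rfl, rfl⟩ | ⟨rfl, rfl⟩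
  · rfl
  · exact Or.comm

variable (H : GrowthHistory)

lemma next_range (m : ℕ) (hm : 3 ≤ m) :
    ∀ k, 1 ≤ k → k ≤ m → 1 ≤ H.next m k ∧ H.next m k ≤ m := by
  induction m, hm using Nat.le_induction with
  | base =>
    intro k h1 h3
    interval_cases k <;> simp [H.base1, H.base2, H.base3]
  | succ m hm ih =>
    intro k h1 hk
    have h4 : 4 ≤ m + 1 := by omega
    rcases eq_or_ne k (m + 1) with rfl | hne
    · rw [H.step_new₂ _ h4]
      have := H.nu_pos_p _ h4
      have := H.nu_lt_p _ h4
      omega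
    · rcases eq_or_ne k (H.nuMinus (m + 1)) with rfl | hne2
      · rw [H.step_new₁ _ h4]; omega
      · rw [H.step_old _ h4 k h1 (by omega) hne2]
        simp only [Nat.add_sub_cancel]
        have := ih k h1 (by omega)
        omega

lemma no_two_cycle (m : ℕ) (hm : 3 ≤ m) :
    ∀ k, 1 ≤ k → k ≤ m → H.next m (H.next m k) ≠ k := by
  induction m, hm using Nat.le_induction with
  | base =>
    intro k h1 h3
    interval_cases k <;> simp [H.base1, H.base2, H.base3]
  | succ m hm ih =>
    intro k h1 hk hcon
    have h4 : 4 ≤ m + 1 := by omega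
    have hpp := H.nu_pos_p _ h4
    have hpl := H.nu_lt_p _ h4
    have hmp := H.nu_pos_m _ h4
    have hml := H.nu_lt_m _ h4
    have hne := H.nu_ne _ h4
    rcases eq_or_ne k (H.nuMinus (m + 1)) with rfl | hq
    · rw [H.step_new₁ _ h4, H.step_new₂ _ h4] at hcon
      exact hne hcon
    · rcases eq_or_ne k (m + 1) with rfl | hk1
      · rw [H.step_new₂ _ h4] at hcon
        rw [H.step_old _ h4 _ hpp (by omega) (fun he => hne he)] at hcon
        simp only [Nat.add_sub_cancel] at hcon
        have := H.next_range m (by omega) (H.nuPlus (m + 1)) hpp (by omega)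
        omega
      · rw [H.step_old _ h4 k h1 (by omega) hq] at hcon
        simp only [Nat.add_sub_cancel] at hcon
        have hz := H.next_range m (by omega) k h1 (by omega)
        set z := H.next m k with hzdef
        rcases eq_or_ne z (H.nuMinus (m + 1)) with hz2 | hz2
        · rw [hz2, H.step_new₁ _ h4] at hcon
          omega
        · rw [H.step_old _ h4 z hz.1 (by omega) hz2] at hcon
          simp only [Nat.add_sub_cancel] at hcon
          exact ih k h1 (by omega) hcon

lemma edge_succ_iff (m x y : ℕ) (hm : 3 ≤ m) (hx1 : 1 ≤ x) (hx : x ≤ m)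
    (hy1 : 1 ≤ y) (hy : y ≤ m) :
    isEdge H (m + 1) x y ↔ isEdge H m x y ∧ nuSet H (m + 1) ≠ {x, y} := by
  have h4 : 4 ≤ m + 1 := by omega
  have hins : H.next m (H.nuMinus (m + 1)) = H.nuPlus (m + 1) := by
    have := H.insert_mem (m + 1) h4
    simpa using this
  constructor
  · rintro (h | h)
    · have hxq : x ≠ H.nuMinus (m + 1) := by
        intro he
        rw [he, H.step_new₁ _ h4] at h
        omega
      have h' : H.next m x = y := by
        have := H.step_old _ h4 x hx1 (by omega) hxq
        simp only [Nat.add_sub_cancel] at this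
        rw [← this]; exact h
      refine ⟨Or.inl h', ?_⟩
      intro hset
      rcases pair_eq_pair_iff.mp hset with ⟨hp, hq⟩ | ⟨hp, hq⟩
      · exact H.no_two_cycle m hm x hx1 hx (by rw [h', ← hq, hins, hp])
      · exact hxq hq.symm
    · have hyq : y ≠ H.nuMinus (m + 1) := by
        intro he
        rw [he, H.step_new₁ _ h4] at h
        omega
      have h' : H.next m y = x := by
        have := H.step_old _ h4 y hy1 (by omega) hyq
        simp only [Nat.add_sub_cancel] at this
        rw [← this]; exact h
      refine ⟨Or.inr h', ?_⟩
      intro hset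
      rcases pair_eq_pair_iff.mp hset with ⟨hp, hq⟩ | ⟨hp, hq⟩
      · exact hyq hq.symm
      · exact H.no_two_cycle m hm y hy1 hy (by rw [h', ← hq, hins, hp])
  · rintro ⟨h | h, hne⟩
    · rcases eq_or_ne x (H.nuMinus (m + 1)) with hxq | hxq
      · exfalso
        apply hne
        have hyp : y = H.nuPlus (m + 1) := by rw [← hins, ← hxq, h]
        rw [nuSet, ← hxq, ← hyp]
        exact Finset.pair_comm y x
      · left
        have := H.step_old _ h4 x hx1 (by omega) hxq
        simp only [Nat.add_sub_cancel] at this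
        rw [this]; exact h
    · rcases eq_or_ne y (H.nuMinus (m + 1)) with hyq | hyq
      · exfalso
        apply hne
        have hxp : x = H.nuPlus (m + 1) := by rw [← hins, ← hyq, h]
        rw [nuSet, ← hyq, ← hxp]
      · right
        have := H.step_old _ h4 y hy1 (by omega) hyq
        simp only [Nat.add_sub_cancel] at this
        rw [this]; exact h

lemma edge_down (k : ℕ) (hk : 3 ≤ k) (x y : ℕ) (hx1 : 1 ≤ x) (hx : x ≤ k)
    (hy1 : 1 ≤ y) (hy : y ≤ k) :
    ∀ m, k ≤ m → isEdge H m x y → isEdge H k x y := by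
  intro m hm
  induction m, hm using Nat.le_induction with
  | base => exact id
  | succ m hm ih =>
    intro h
    exact ih ((H.edge_succ_iff m x y (by omega) hx1 (by omega) hy1 (by omega)).mp h).1

lemma destroyed (k : ℕ) (hk : 4 ≤ k) :
    ∀ m, k ≤ m → ¬ isEdge H m (H.nuPlus k) (H.nuMinus k) := by
  have hp1 := H.nu_pos_p k hk
  have hpl := H.nu_lt_p k hk
  have hq1 := H.nu_pos_m k hk
  have hql := H.nu_lt_m k hk
  have hne := H.nu_ne k hk
  have hbase : ¬ isEdge H k (H.nuPlus k) (H.nuMinus k) := by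
    rintro (h | h)
    · rw [H.step_old k hk _ hp1 (by omega) hne] at h
      have h2 := H.insert_mem k hk
      exact H.no_two_cycle (k - 1) (by omega) _ hp1 (by omega) (by rw [h, h2])
    · rw [H.step_new₁ k hk] at h
      omega
  intro m hm
  induction m, hm using Nat.le_induction with
  | base => exact hbase
  | succ m hm ih =>
    intro h
    exact ih ((H.edge_succ_iff m _ _ (by omega) hp1 (by omega) hq1 (by omega)).mp h).1

lemma edge_creation (y : ℕ) (hy : 4 ≤ y) (x : ℕ) (h1 : 1 ≤ x) (hxy : x < y) :
    ∀ m, y ≤ m → isEdge H m x y → x = H.nuPlus y ∨ x = H.nuMinus y := by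
  have hbase : isEdge H y x y → x = H.nuPlus y ∨ x = H.nuMinus y := by
    rintro (h | h)
    · by_cases hq : x = H.nuMinus y
      · exact Or.inr hq
      · exfalso
        rw [H.step_old y hy x h1 (by omega) hq] at h
        have := H.next_range (y - 1) (by omega) x h1 (by omega)
        omega
    · rw [H.step_new₂ y hy] at h
      exact Or.inl h.symm
  intro m hm
  induction m, hm using Nat.le_induction with
  | base => exact hbase
  | succ m hm ih =>
    intro h
    exact ih ((H.edge_succ_iff m x y (by omega) h1 (by omega) (by omega) (by omega)).mp h).1

lemma tri_edge (x y : ℕ) (hx1 : 1 ≤ x) (hx : x ≤ 3) (hy1 : 1 ≤ y) (hy : y ≤ 3)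
    (hne : x ≠ y) : isEdge H 3 x y := by
  unfold isEdge
  interval_cases x <;> interval_cases y <;>
    simp [H.base1, H.base2, H.base3] at hne ⊢

end GrowthHistory

lemma key (A B : GrowthHistory) (n : ℕ) (hn : 4 ≤ n) (hv : isVertex A B n) :
    (∀ k, ¬ edgeFrom A B n k) ↔ isEdge B n (A.nuPlus n) (A.nuMinus n) := by
  set x := A.nuPlus n with hxdef
  set y := A.nuMinus n with hydef
  have hx1 := A.nu_pos_p n hn
  have hxl := A.nu_lt_p n hn
  have hy1 := A.nu_pos_m n hn
  have hyl := A.nu_lt_m n hn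
  have hxy := A.nu_ne n hn
  have hA : isEdge A (n - 1) x y := Or.inr (A.insert_mem n hn)
  have hnuA : nuSet A n = {x, y} := rfl
  constructor
  · -- no edges → isEdge B n x y
    intro hno
    -- step 1: the edge exists at time M' = max (max x y) 3
    have hstart : ∃ M', 3 ≤ M' ∧ M' ≤ n - 1 ∧ x ≤ M' ∧ y ≤ M' ∧ isEdge B M' x y := by
      by_cases hM : max x y ≤ 3
      · exact ⟨3, le_rfl, by omega, by omega, by omega,
          B.tri_edge x y hx1 (by omega) hy1 (by omega) hxy⟩
      · set M := max x y with hMdef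
        have h4M : 4 ≤ M := by omega
        -- w is the min
        obtain ⟨w, hw1, hwM, hpair⟩ : ∃ w, 1 ≤ w ∧ w < M ∧ ({x, y} : Finset ℕ) = {w, M} := by
          rcases Nat.le_total x y with hle | hle
          · exact ⟨x, hx1, by omega, by rw [show M = y by omega]⟩
          · exact ⟨y, hy1, by omega, by rw [show M = x by omega, Finset.pair_comm]⟩
        have hAwM : isEdge A (n - 1) w M := (GrowthHistory.isEdge_congr hpair).mp hA
        have hwA : w = A.nuPlus M ∨ w = A.nuMinus M :=
          A.edge_creation M h4M w hw1 hwM (n - 1) (by omega) hAwM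
        by_cases hwB : w = B.nuPlus M ∨ w = B.nuMinus M
        · have : isEdge B M w M := by
            rcases hwB with hw | hw
            · exact Or.inr (by rw [B.step_new₂ M h4M, hw])
            · exact Or.inl (by rw [hw, B.step_new₁ M h4M])
          exact ⟨M, by omega, by omega, by omega, by omega,
            (GrowthHistory.isEdge_congr hpair).mpr this⟩
        · exfalso
          push_neg at hwB
          have hBp1 := B.nu_pos_p M h4M
          have hBpl := B.nu_lt_p M h4M
          have hBq1 := B.nu_pos_m M h4M
          have hBql := B.nu_lt_m M h4M
          apply hno M
          refine ⟨hv, ⟨h4M, ?_⟩, by omega, Or.inr ⟨hMdef, ?_⟩⟩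
          · -- nuSet A M ≠ nuSet B M since w ∈ A-side, w ∉ B-side
            intro hset
            have : w ∈ nuSet B M := by
              rw [← hset, GrowthHistory.mem_nuSet]
              exact hwA
            rw [GrowthHistory.mem_nuSet] at this
            tauto
          · -- nuSet B M ∩ nuSet A n = ∅
            rw [hnuA, hpair]
            ext z
            simp only [Finset.mem_inter, GrowthHistory.mem_nuSet, Finset.mem_insert,
              Finset.mem_singleton, Finset.notMem_empty, iff_false]
            rintro ⟨hz1, hz2⟩
            rcases hwB with ⟨hb1, hb2⟩
            omega
    obtain ⟨M', hM3, hMn, hxM, hyM, hEM⟩ := hstart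
    -- step 2: go up from M' to n
    have up : ∀ m, M' ≤ m → m ≤ n → isEdge B m x y := by
      intro m hm
      induction m, hm using Nat.le_induction with
      | base => intro _; exact hEM
      | succ m hm ih =>
        intro hmn
        have hprev := ih (by omega)
        refine (B.edge_succ_iff m x y (by omega) hx1 (by omega) hy1 (by omega)).mpr
          ⟨hprev, ?_⟩
        intro hset
        rcases eq_or_lt_of_le hmn with heq | hlt
        · -- m + 1 = n : contradicts isVertex
          apply hv.2
          rw [hnuA, ← heq, hset]
        · -- m + 1 < n : type-1 edge from n to m+1
          apply hno (m + 1)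
          refine ⟨hv, ⟨by omega, ?_⟩, by omega, Or.inl ?_⟩
          · -- nuSet A (m+1) ≠ nuSet B (m+1)
            intro hsetA
            rw [hset] at hsetA
            have : isEdge A (n - 1) (A.nuPlus (m + 1)) (A.nuMinus (m + 1)) :=
              (GrowthHistory.isEdge_congr hsetA.symm).mp hA
            exact A.destroyed (m + 1) (by omega) (n - 1) (by omega) this
          · rw [type1, hnuA, hset]
    exact up n (by omega) le_rfl
  · -- isEdge B n x y → no edges
    intro hE k hedge
    obtain ⟨_, ⟨hk4, hkv⟩, hkn, ht⟩ := hedge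
    rcases ht with h1 | h2
    · -- type 1
      rw [type1, hnuA] at h1
      have : isEdge B n (B.nuPlus k) (B.nuMinus k) :=
        (GrowthHistory.isEdge_congr h1).mp hE
      exact B.destroyed k hk4 n (by omega) this
    · -- type 2
      obtain ⟨hkmax, hdisj⟩ := h2
      rw [← hxdef, ← hydef] at hkmax
      -- k = max x y; the smaller endpoint
      obtain ⟨w, hw1, hwk, hpair⟩ : ∃ w, 1 ≤ w ∧ w < k ∧ ({x, y} : Finset ℕ) = {w, k} := by
        rcases Nat.le_total x y with hle | hle
        · exact ⟨x, hx1, by omega, by rw [show k = y by omega]⟩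
        · exact ⟨y, hy1, by omega, by rw [show k = x by omega, Finset.pair_comm]⟩
      have hEk : isEdge B k x y :=
        B.edge_down k (by omega) x y hx1 (by omega) hy1 (by omega) n (by omega) hE
      have hEwk : isEdge B k w k := (GrowthHistory.isEdge_congr hpair).mp hEk
      have hwB : w = B.nuPlus k ∨ w = B.nuMinus k :=
        B.edge_creation k hk4 w hw1 hwk k le_rfl hEwk
      have hmem : w ∈ nuSet B k ∩ nuSet A n := by
        rw [Finset.mem_inter, GrowthHistory.mem_nuSet, hnuA, hpair]
        exact ⟨hwB, by simp⟩
      rw [hdisj] at hmem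
      exact absurd hmem (Finset.notMem_empty w)

/-- Node `n ≥ 4` is an isolated vertex of the pedigree graph `G_n^{AB}` if and only if
`ν_A(n)` is a cycle-edge of `B_n` and `ν_B(n)` is a cycle-edge of `A_n`. -/
theorem isolated_vertex_iff (A B : GrowthHistory) (n : ℕ) (hn : 4 ≤ n) :
    (isVertex A B n ∧ ∀ k, ¬ edgeFrom A B n k ∧ ¬ edgeFrom B A n k) ↔
      (isEdge B n (A.nuPlus n) (A.nuMinus n) ∧ isEdge A n (B.nuPlus n) (B.nuMinus n)) := by
  constructor
  · rintro ⟨hv, hno⟩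
    have hv' : isVertex B A n := ⟨hn, Ne.symm hv.2⟩
    exact ⟨(key A B n hn hv).mp (fun k => (hno k).1),
      (key B A n hn hv').mp (fun k => (hno k).2)⟩
  · rintro ⟨hEB, hEA⟩
    have hv : isVertex A B n := by
      refine ⟨hn, fun heq => ?_⟩
      simp only [nuSet] at heq
      have h2 := (GrowthHistory.isEdge_congr heq).mp hEB
      exact B.destroyed n hn n le_rfl h2
    exact ⟨hv, fun k => ⟨(key A B n hn hv).mpr hEB k,
      (key B A n hn ⟨hn, Ne.symm hv.2⟩).mpr hEA k⟩⟩
end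

section
/- Let A, B be two cycle growth histories and n ≥ 4. If ν_A(n) is an edge of B_{n-1}, then (if n is a vertex of the pedigree graph) there is no edge 'from A to B' incident to n in G_n^{AB}. -/
/-- No 2-cycles: `next m` has no transposition among nodes `1..m`. -/
lemma noTwoCycle (H : GrowthHistory) :
    ∀ m, 3 ≤ m → ∀ a b, 1 ≤ a → a ≤ m → 1 ≤ b → b ≤ m → a ≠ b →
      H.next m a = b → H.next m b = a → False := by
  intro m hm
  induction m, hm using Nat.le_induction with
  | base =>
    intro a b ha1 ha3 hb1 hb3 hab hab1 hab2
    interval_cases a <;> interval_cases b <;>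
      simp_all [H.base1, H.base2, H.base3]
  | succ m hm ih =>
    intro a b ha1 ham hb1 hbm hab hab1 hab2
    have h4 : 4 ≤ m + 1 := by omega
    -- helper: if next (m+1) x = m+1 with x in range, then x = nuMinus (m+1)
    have hinj : ∀ x, 1 ≤ x → x ≤ m + 1 → H.next (m+1) x = m + 1 → x = H.nuMinus (m+1) := by
      intro x hx1 hx2 hx
      have h1 := H.prev_next (m+1) (by omega) x hx1 hx2
      have h2 := H.prev_next (m+1) (by omega) (H.nuMinus (m+1))
        (H.nu_pos_m _ h4) (le_of_lt (H.nu_lt_m _ h4))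
      rw [hx] at h1
      rw [H.step_new₁ _ h4] at h2
      omega
    have hne := H.nu_ne (m+1) h4
    -- a ≠ m+1 and b ≠ m+1
    have hA : a ≠ m + 1 := by
      intro h; subst h
      have hb : b = H.nuPlus (m+1) := by rw [← hab1, H.step_new₂ _ h4]
      have hb' : b = H.nuMinus (m+1) := hinj b hb1 hbm hab2
      omega
    have hB : b ≠ m + 1 := by
      intro h; subst h
      have ha : a = H.nuPlus (m+1) := by rw [← hab2, H.step_new₂ _ h4]
      have ha' : a = H.nuMinus (m+1) := hinj a ha1 ham hab1
      omega
    have hAm : a ≠ H.nuMinus (m+1) := by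
      intro h
      have : H.next (m+1) a = m + 1 := by rw [h]; exact H.step_new₁ _ h4
      omega
    have hBm : b ≠ H.nuMinus (m+1) := by
      intro h
      have : H.next (m+1) b = m + 1 := by rw [h]; exact H.step_new₁ _ h4
      omega
    have e1 := H.step_old (m+1) h4 a ha1 (by omega) hAm
    have e2 := H.step_old (m+1) h4 b hb1 (by omega) hBm
    simp only [Nat.add_sub_cancel] at e1 e2
    exact ih a b ha1 (by omega) hb1 (by omega) hab (e1 ▸ hab1) (e2 ▸ hab2)

/-- Once node `k` subdivides the edge `ν(k)`, that pair is never again a cycle-edge. -/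
lemma nu_not_edge (H : GrowthHistory) (k : ℕ) (hk : 4 ≤ k) :
    ∀ m, k ≤ m → ¬ isEdge H m (H.nuPlus k) (H.nuMinus k) := by
  intro m hm
  induction m, hm using Nat.le_induction with
  | base =>
    rintro (h | h)
    · -- next k (nuPlus k) = nuMinus k; push down to k-1 to get a 2-cycle
      have hp1 := H.nu_pos_p k hk
      have hp2 := H.nu_lt_p k hk
      have hm1 := H.nu_pos_m k hk
      have hm2 := H.nu_lt_m k hk
      have hne := H.nu_ne k hk
      have e := H.step_old k hk (H.nuPlus k) hp1 (by omega) hne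
      rw [e] at h
      have e2 := H.insert_mem k hk
      exact noTwoCycle H (k-1) (by omega) (H.nuPlus k) (H.nuMinus k)
        hp1 (by omega) hm1 (by omega) hne h e2
    · have := H.step_new₁ k hk
      have := H.nu_lt_p k hk
      omega
  | succ m hm ih =>
    have h4 : 4 ≤ m + 1 := by omega
    have hp1 := H.nu_pos_p k hk
    have hp2 : H.nuPlus k < k := H.nu_lt_p k hk
    have hm1 := H.nu_pos_m k hk
    have hm2 : H.nuMinus k < k := H.nu_lt_m k hk
    rintro (h | h)
    · by_cases hc : H.nuPlus k = H.nuMinus (m+1)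
      · rw [hc, H.step_new₁ _ h4] at h; omega
      · have e := H.step_old (m+1) h4 (H.nuPlus k) hp1 (by omega) hc
        simp only [Nat.add_sub_cancel] at e
        exact ih (Or.inl (e ▸ h))
    · by_cases hc : H.nuMinus k = H.nuMinus (m+1)
      · rw [hc, H.step_new₁ _ h4] at h; omega
      · have e := H.step_old (m+1) h4 (H.nuMinus k) hm1 (by omega) hc
        simp only [Nat.add_sub_cancel] at e
        exact ih (Or.inr (e ▸ h))

/-- Any neighbor of `k` smaller than `k` (at any time `m ≥ k`) is one of its original
neighbors `ν(k)`. -/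
lemma small_neighbor (H : GrowthHistory) (k : ℕ) (hk : 4 ≤ k) :
    ∀ m, k ≤ m → ∀ u, 1 ≤ u → u < k → isEdge H m k u →
      u = H.nuPlus k ∨ u = H.nuMinus k := by
  intro m hm
  induction m, hm using Nat.le_induction with
  | base =>
    rintro u hu1 hu2 (h | h)
    · left; rw [← h, H.step_new₂ k hk]
    · right
      have h1 := H.prev_next k (by omega) u hu1 (by omega)
      have h2 := H.prev_next k (by omega) (H.nuMinus k)
        (H.nu_pos_m _ hk) (le_of_lt (H.nu_lt_m _ hk))
      rw [h] at h1
      rw [H.step_new₁ _ hk] at h2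
      omega
  | succ m hm ih =>
    have h4 : 4 ≤ m + 1 := by omega
    rintro u hu1 hu2 (h | h)
    · by_cases hc : k = H.nuMinus (m+1)
      · rw [hc, H.step_new₁ _ h4] at h; omega
      · have e := H.step_old (m+1) h4 k (by omega) (by omega) hc
        simp only [Nat.add_sub_cancel] at e
        exact ih u hu1 hu2 (Or.inl (e ▸ h))
    · by_cases hc : u = H.nuMinus (m+1)
      · rw [hc, H.step_new₁ _ h4] at h; omega
      · have e := H.step_old (m+1) h4 u hu1 (by omega) hc
        simp only [Nat.add_sub_cancel] at e
        exact ih u hu1 hu2 (Or.inr (e ▸ h))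

/-- If `ν_A(n)` is a cycle-edge of `B_{n-1}` then (even if `n` is a vertex of the pedigree
graph) there is no edge "from `A` to `B`" incident to `n` in `G_n^{AB}`. -/
theorem no_AB_edge_of_common (A B : GrowthHistory) (n : ℕ) (hn : 4 ≤ n)
    (h : isEdge B (n - 1) (A.nuPlus n) (A.nuMinus n)) :
    ∀ k, ¬ edgeFrom A B n k := by
  rintro k ⟨hvn, ⟨hk4, -⟩, hkn, hor⟩
  have hAne := A.nu_ne n hn
  have hkn1 : k ≤ n - 1 := by omega
  rcases hor with h1 | ⟨hmax, hempty⟩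
  · -- type 1: ν_A(n) = ν_B(k), but ν_B(k) is no longer an edge of B_{n-1}
    have hBp : A.nuPlus n ∈ nuSet B k := by rw [← h1]; simp [nuSet]
    have hBm : A.nuMinus n ∈ nuSet B k := by rw [← h1]; simp [nuSet]
    simp only [nuSet, Finset.mem_insert, Finset.mem_singleton] at hBp hBm
    have hEdge : isEdge B (n-1) (B.nuPlus k) (B.nuMinus k) := by
      rcases hBp with hp | hp <;> rcases hBm with hq | hq
      · exact absurd (hp.trans hq.symm) hAne
      · rw [hp, hq] at h; exact h
      · rw [hp, hq] at h; exact h.symm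
      · exact absurd (hp.trans hq.symm) hAne
    exact nu_not_edge B k hk4 (n-1) hkn1 hEdge
  · -- type 2: k = max ν_A(n), and the smaller element of ν_A(n) is a neighbor of k in B
    have hp1 := A.nu_pos_p n hn
    have hm1 := A.nu_pos_m n hn
    rcases max_choice (A.nuPlus n) (A.nuMinus n) with hc | hc
    · -- k = nuPlus n, u = nuMinus n
      have hk : k = A.nuPlus n := hmax.trans hc
      have hu : A.nuMinus n < k := by
        rw [hk]; omega
      have hEdge : isEdge B (n-1) k (A.nuMinus n) := by rw [hk]; exact h
      have hmem := small_neighbor B k hk4 (n-1) hkn1 (A.nuMinus n) hm1 hu hEdge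
      have : A.nuMinus n ∈ nuSet B k ∩ nuSet A n := by
        rcases hmem with h' | h' <;> simp [nuSet, h']
      rw [hempty] at this
      exact absurd this (Finset.notMem_empty _)
    · -- k = nuMinus n, u = nuPlus n
      have hk : k = A.nuMinus n := hmax.trans hc
      have hu : A.nuPlus n < k := by
        rw [hk]; omega
      have hEdge : isEdge B (n-1) k (A.nuPlus n) := by
        rw [hk]; exact Or.symm h
      have hmem := small_neighbor B k hk4 (n-1) hkn1 (A.nuPlus n) hp1 hu hEdge
      have : A.nuPlus n ∈ nuSet B k ∩ nuSet A n := by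
        rcases hmem with h' | h' <;> simp [nuSet, h']
      rw [hempty] at this
      exact absurd this (Finset.notMem_empty _)
end

section
/- In any pedigree graph G_n^{AB}, each vertex n has at most 2 edges to smaller vertices: at most one edge 'from A to B' and at most one edge 'from B to A'. -/
section Aux
variable (H : GrowthHistory)

lemma mem_nuSet {H : GrowthHistory} {a n : ℕ} :
    a ∈ nuSet H n ↔ a = H.nuPlus n ∨ a = H.nuMinus n := by
  simp [nuSet]

/-- No 2-cycles in the successor function. -/
lemma GH_no2 (H : GrowthHistory) :
    ∀ m, 3 ≤ m → ∀ x y, 1 ≤ x → x ≤ m → 1 ≤ y → y ≤ m → x ≠ y →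
      H.next m x = y → H.next m y ≠ x := by
  intro m hm
  induction m, hm using Nat.le_induction with
  | base =>
      intro x y hx1 hx2 hy1 hy2 hxy h
      interval_cases x <;> interval_cases y <;>
        simp_all [H.base1, H.base2, H.base3]
  | succ m hm ih =>
      intro x y hx1 hx2 hy1 hy2 hxy h hback
      have h4 : 4 ≤ m + 1 := by omega
      have hpp1 : 1 ≤ H.nuPlus (m+1) := H.nu_pos_p _ h4
      have hpp2 : H.nuPlus (m+1) < m+1 := H.nu_lt_p _ h4
      have hmm1 : 1 ≤ H.nuMinus (m+1) := H.nu_pos_m _ h4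
      have hmm2 : H.nuMinus (m+1) < m+1 := H.nu_lt_m _ h4
      have hne := H.nu_ne (m+1) h4
      by_cases hxm : x = m + 1
      · subst hxm
        have hy : y = H.nuPlus (m+1) := by
          rw [← h, H.step_new₂ (m+1) h4]
        have e1 : H.next (m+1) (H.nuPlus (m+1)) = m+1 := by rw [← hy]; exact hback
        have e2 := H.step_new₁ (m+1) h4
        have i1 := H.prev_next (m+1) (by omega) (H.nuPlus (m+1)) hpp1 (by omega)
        have i2 := H.prev_next (m+1) (by omega) (H.nuMinus (m+1)) hmm1 (by omega)
        rw [e1] at i1; rw [e2] at i2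
        exact hne (i1.symm.trans i2)
      · by_cases hym : y = m + 1
        · subst hym
          have hx : x = H.nuPlus (m+1) := by
            rw [← hback, H.step_new₂ (m+1) h4]
          have e1 : H.next (m+1) (H.nuPlus (m+1)) = m+1 := by rw [← hx]; exact h
          have e2 := H.step_new₁ (m+1) h4
          have i1 := H.prev_next (m+1) (by omega) (H.nuPlus (m+1)) hpp1 (by omega)
          have i2 := H.prev_next (m+1) (by omega) (H.nuMinus (m+1)) hmm1 (by omega)
          rw [e1] at i1; rw [e2] at i2
          exact hne (i1.symm.trans i2)
        · have hxq : x ≠ H.nuMinus (m+1) := by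
            intro hq; rw [hq, H.step_new₁ (m+1) h4] at h; omega
          have hyq : y ≠ H.nuMinus (m+1) := by
            intro hq; rw [hq, H.step_new₁ (m+1) h4] at hback; omega
          rw [H.step_old (m+1) h4 x hx1 (by omega) hxq] at h
          rw [H.step_old (m+1) h4 y hy1 (by omega) hyq] at hback
          exact ih x y hx1 (by omega) hy1 (by omega) hxy h hback

/-- The edge into which `k` was inserted never reappears. -/
lemma GH_nonedge (H : GrowthHistory) (k : ℕ) (hk : 4 ≤ k) :
    ∀ m, k ≤ m → H.next m (H.nuMinus k) ≠ H.nuPlus k ∧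
      H.next m (H.nuPlus k) ≠ H.nuMinus k := by
  have hpp1 : 1 ≤ H.nuPlus k := H.nu_pos_p _ hk
  have hpp2 : H.nuPlus k < k := H.nu_lt_p _ hk
  have hmm1 : 1 ≤ H.nuMinus k := H.nu_pos_m _ hk
  have hmm2 : H.nuMinus k < k := H.nu_lt_m _ hk
  have hne := H.nu_ne k hk
  intro m hm
  induction m, hm using Nat.le_induction with
  | base =>
      constructor
      · rw [H.step_new₁ k hk]; omega
      · rw [H.step_old k hk (H.nuPlus k) hpp1 (by omega) hne]
        have hedge := H.insert_mem k hk
        exact GH_no2 H (k-1) (by omega) (H.nuMinus k) (H.nuPlus k)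
          hmm1 (by omega) hpp1 (by omega) (Ne.symm hne) hedge
  | succ m hm ih =>
      have h4 : 4 ≤ m + 1 := by omega
      constructor
      · by_cases hq : H.nuMinus k = H.nuMinus (m+1)
        · rw [hq, H.step_new₁ (m+1) h4]; omega
        · rw [H.step_old (m+1) h4 (H.nuMinus k) hmm1 (by omega) hq]; exact ih.1
      · by_cases hq : H.nuPlus k = H.nuMinus (m+1)
        · rw [hq, H.step_new₁ (m+1) h4]; omega
        · rw [H.step_old (m+1) h4 (H.nuPlus k) hpp1 (by omega) hq]; exact ih.2

/-- The neighbors of node `k` at any time `m ≥ k` are either `ν±(k)` or later nodes. -/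
lemma GH_adj (H : GrowthHistory) (k : ℕ) (hk : 4 ≤ k) :
    ∀ m, k ≤ m → ∀ x, 1 ≤ x → x ≤ m →
      (H.next m k = x → x = H.nuPlus k ∨ x = H.nuMinus k ∨ k < x) ∧
      (H.next m x = k → x = H.nuPlus k ∨ x = H.nuMinus k ∨ k < x) := by
  have hmm1 : 1 ≤ H.nuMinus k := H.nu_pos_m _ hk
  have hmm2 : H.nuMinus k < k := H.nu_lt_m _ hk
  intro m hm
  induction m, hm using Nat.le_induction with
  | base =>
      intro x hx1 hx2
      constructor
      · intro h; left; rw [← h]; exact H.step_new₂ k hk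
      · intro h; right; left
        have e2 := H.step_new₁ k hk
        have i1 := H.prev_next k (by omega) x hx1 hx2
        have i2 := H.prev_next k (by omega) (H.nuMinus k) hmm1 (by omega)
        rw [h] at i1; rw [e2] at i2
        exact i1.symm.trans i2
  | succ m hm ih =>
      intro x hx1 hx2
      have h4 : 4 ≤ m + 1 := by omega
      constructor
      · intro h
        by_cases hkq : k = H.nuMinus (m+1)
        · right; right
          have : x = m + 1 := by rw [← h, hkq, H.step_new₁ (m+1) h4]
          omega
        · by_cases hxm : x = m + 1
          · right; right; omega
          · rw [H.step_old (m+1) h4 k (by omega) (by omega) hkq] at h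
            exact (ih x hx1 (by omega)).1 h
      · intro h
        by_cases hxm : x = m + 1
        · right; right; omega
        · by_cases hxq : x = H.nuMinus (m+1)
          · exfalso; rw [hxq, H.step_new₁ (m+1) h4] at h; omega
          · rw [H.step_old (m+1) h4 x hx1 (by omega) hxq] at h
            exact (ih x hx1 (by omega)).2 h

lemma nuSet_inj (H : GrowthHistory) {k k' : ℕ} (hk : 4 ≤ k) (hk' : 4 ≤ k')
    (h : nuSet H k = nuSet H k') : k = k' := by
  have aux : ∀ a b : ℕ, 4 ≤ a → 4 ≤ b → b < a → nuSet H a = nuSet H b → False := by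
    intro a b ha hb hba heq
    have hp : H.nuPlus a = H.nuPlus b ∨ H.nuPlus a = H.nuMinus b :=
      mem_nuSet.mp (heq ▸ mem_nuSet.mpr (Or.inl rfl))
    have hq : H.nuMinus a = H.nuPlus b ∨ H.nuMinus a = H.nuMinus b :=
      mem_nuSet.mp (heq ▸ mem_nuSet.mpr (Or.inr rfl))
    have hedge := H.insert_mem a ha
    have hnon := GH_nonedge H b hb (a-1) (by omega)
    have hnea := H.nu_ne a ha
    rcases hp with hp | hp <;> rcases hq with hq | hq
    · exact hnea (hp.trans hq.symm)
    · rw [hp, hq] at hedge; exact hnon.1 hedge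
    · rw [hp, hq] at hedge; exact hnon.2 hedge
    · exact hnea (hp.trans hq.symm)
  rcases lt_trichotomy k k' with hlt | he | hlt
  · exact absurd (aux k' k hk' hk hlt h.symm) (by simp)
  · exact he
  · exact absurd (aux k k' hk hk' hlt h) (by simp)

lemma mixed_false (A B : GrowthHistory) (n k k' : ℕ)
    (hk : 4 ≤ k) (hk' : 4 ≤ k')
    (h1 : type1 A B n k) (h2 : type2 A B n k') : False := by
  obtain ⟨hmax, hdisj⟩ := h2
  have hk'mem : k' ∈ nuSet A n := by
    rcases max_cases (A.nuPlus n) (A.nuMinus n) with ⟨h, _⟩ | ⟨h, _⟩ <;>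
      exact mem_nuSet.mpr (by rw [hmax, h]; simp)
  have hk'memB : k' ∈ nuSet B k := h1 ▸ hk'mem
  have hbound : ∀ x ∈ nuSet A n, x ≤ k' := by
    intro x hx
    rcases mem_nuSet.mp hx with h | h <;> rw [h, hmax]
    · exact le_max_left _ _
    · exact le_max_right _ _
  have hpp1 : 1 ≤ B.nuPlus k := B.nu_pos_p _ hk
  have hpp2 : B.nuPlus k < k := B.nu_lt_p _ hk
  have hmm1 : 1 ≤ B.nuMinus k := B.nu_pos_m _ hk
  have hmm2 : B.nuMinus k < k := B.nu_lt_m _ hk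
  have hneB := B.nu_ne k hk
  have hk'lt : k' < k := by
    rcases mem_nuSet.mp hk'memB with h | h <;> omega
  have hedge := B.insert_mem k hk
  -- let x be the other endpoint of the edge ν_B(k); get x ∈ ν_B(k')
  have key : ∃ x, x ∈ nuSet B k ∧ x ≠ k' ∧
      (x = B.nuPlus k' ∨ x = B.nuMinus k' ∨ k' < x) := by
    rcases mem_nuSet.mp hk'memB with h | h
    · -- k' = ν⁺_B(k); other endpoint x = ν⁻_B(k), next (k-1) x = k'
      refine ⟨B.nuMinus k, mem_nuSet.mpr (Or.inr rfl), by omega, ?_⟩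
      refine (GH_adj B k' hk' (k-1) (by omega) (B.nuMinus k) hmm1 (by omega)).2 ?_
      rw [hedge, h]
    · refine ⟨B.nuPlus k, mem_nuSet.mpr (Or.inl rfl), by omega, ?_⟩
      refine (GH_adj B k' hk' (k-1) (by omega) (B.nuPlus k) hpp1 (by omega)).1 ?_
      rw [h]; exact hedge
  obtain ⟨x, hxB, hxne, hx⟩ := key
  have hxA : x ∈ nuSet A n := h1 ▸ hxB
  have hxle : x ≤ k' := hbound x hxA
  have hxk' : x ∈ nuSet B k' := by
    rcases hx with h | h | h
    · exact mem_nuSet.mpr (Or.inl h)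
    · exact mem_nuSet.mpr (Or.inr h)
    · omega
  have : x ∈ nuSet B k' ∩ nuSet A n := Finset.mem_inter.mpr ⟨hxk', hxA⟩
  rw [hdisj] at this
  exact Finset.notMem_empty x this

lemma edgeFrom_unique (A B : GrowthHistory) {n k k' : ℕ}
    (h : edgeFrom A B n k) (h' : edgeFrom A B n k') : k = k' := by
  obtain ⟨hvn, hvk, hkn, ht⟩ := h
  obtain ⟨_, hvk', hk'n, ht'⟩ := h'
  rcases ht with h1 | h2 <;> rcases ht' with h1' | h2'
  · exact nuSet_inj B hvk.1 hvk'.1 (h1.symm.trans h1')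
  · exact (mixed_false A B n k k' hvk.1 hvk'.1 h1 h2').elim
  · exact (mixed_false A B n k' k hvk'.1 hvk.1 h1' h2).elim
  · rw [h2.1, h2'.1]

end Aux

/-- In any pedigree graph, every vertex `n` has at most two edges to smaller vertices:
at most one edge "from `A` to `B`" and at most one edge "from `B` to `A`". -/
theorem at_most_two_down_edges (A B : GrowthHistory) (n : ℕ) :
    (∀ k k', edgeFrom A B n k → edgeFrom A B n k' → k = k') ∧
    (∀ k k', edgeFrom B A n k → edgeFrom B A n k' → k = k') ∧
    Set.ncard {k | edgeFrom A B n k ∨ edgeFrom B A n k} ≤ 2 := by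
  refine ⟨fun k k' h h' => edgeFrom_unique A B h h',
    fun k k' h h' => edgeFrom_unique B A h h', ?_⟩
  classical
  set c₀ : ℕ := if h : ∃ k, edgeFrom A B n k then h.choose else 0 with hc₀
  set c₁ : ℕ := if h : ∃ k, edgeFrom B A n k then h.choose else 0 with hc₁
  have hsub : {k | edgeFrom A B n k ∨ edgeFrom B A n k} ⊆ ({c₀, c₁} : Set ℕ) := by
    intro a ha
    rcases ha with h | h
    · left
      have he : ∃ k, edgeFrom A B n k := ⟨a, h⟩
      rw [hc₀, dif_pos he]
      exact edgeFrom_unique A B h he.choose_spec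
    · right
      have he : ∃ k, edgeFrom B A n k := ⟨a, h⟩
      rw [hc₁, dif_pos he]
      exact edgeFrom_unique B A h he.choose_spec
  calc Set.ncard {k | edgeFrom A B n k ∨ edgeFrom B A n k}
      ≤ Set.ncard ({c₀, c₁} : Set ℕ) :=
        Set.ncard_le_ncard hsub ((Set.finite_singleton c₁).insert c₀)
    _ ≤ Set.ncard ({c₁} : Set ℕ) + 1 := Set.ncard_insert_le c₀ {c₁}
    _ ≤ 2 := by rw [Set.ncard_singleton]
end
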